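/- arXiv:2308.07520 — 2 statements merged into one kernel-verified Lean document; each statement's English description precedes it below -/
import Mathlib

section
/- Let (Ω, P) be a probability space and let L : Ω → ℝ^l, E_Y : Ω → ℝ^m, E_Z : Ω → ℝ^p be square-integrable random vectors with E[E_Y] = 0, and let A be a real m × l matrix and B a real p × l matrix. Define Y = A·L + E_Y and Z = B·L + E_Z. Assume: (1) m > l and A has full column rank l; (2) E_Y is independent of the pair (L, E_Z) (hence of L, of E_Z, and of Z); (3) the l × p cross-moment matrix E[L Zᵀ] has rank l. Then there exists a nonzero ω ∈ ℝ^m with ωᵀ E[Y Zᵀ] = 0 and such that the real random variable ωᵀY is independent of the random vector Z; i.e., (Z, Y) satisfies the GIN condition. -/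
open MeasureTheory ProbabilityTheory Matrix

/-- Product of two L² functions is integrable (on any measure). -/
lemma integrable_mul_of_memL2 {Ω : Type*} [MeasurableSpace Ω] {P : Measure Ω}
    {f g : Ω → ℝ} (hf : MemLp f 2 P) (hg : MemLp g 2 P) :
    Integrable (fun ω => f ω * g ω) P := by
  have h := hg.smul (φ := f) hf (r := 1)
  rw [memLp_one_iff_integrable] at h
  exact h

/-- **GIN condition with a common latent vector.** Let `Y = A·L + E_Y` and
`Z = B·L + E_Z` with `E[E_Y] = 0`, all coordinates square-integrable. If (1) `m > l` and `A`
has full column rank `l`; (2) `E_Y` is independent of the pair `(L, E_Z)`; and (3) the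
cross-moment matrix `E[L Zᵀ]` has rank `l`; then there is a nonzero `w` with
`wᵀ E[Y Zᵀ] = 0` such that `wᵀY` is independent of `Z` — i.e. `(Z, Y)` satisfies the GIN
condition. -/
theorem stmt2 {Ω : Type*} [MeasurableSpace Ω] (P : Measure Ω) [IsProbabilityMeasure P]
    (l m p : ℕ)
    (L : Ω → Fin l → ℝ) (EY : Ω → Fin m → ℝ) (EZ : Ω → Fin p → ℝ)
    (hLmeas : Measurable L) (hEYmeas : Measurable EY) (hEZmeas : Measurable EZ)
    (hLL2 : ∀ i, MemLp (fun ω => L ω i) 2 P)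
    (hEYL2 : ∀ i, MemLp (fun ω => EY ω i) 2 P)
    (hEZL2 : ∀ i, MemLp (fun ω => EZ ω i) 2 P)
    (hEYmean : ∀ i, (∫ ω, EY ω i ∂P) = 0)
    (A : Matrix (Fin m) (Fin l) ℝ) (B : Matrix (Fin p) (Fin l) ℝ)
    (Y : Ω → Fin m → ℝ) (Z : Ω → Fin p → ℝ)
    (hY : ∀ ω, Y ω = A.mulVec (L ω) + EY ω)
    (hZ : ∀ ω, Z ω = B.mulVec (L ω) + EZ ω)
    (h1 : l < m) (hArank : A.rank = l)
    (h2 : IndepFun EY (fun ω => (L ω, EZ ω)) P)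
    (h3 : (Matrix.of fun i j => ∫ ω, L ω i * Z ω j ∂P : Matrix (Fin l) (Fin p) ℝ).rank
      = l) :
    ∃ w : Fin m → ℝ, w ≠ 0 ∧
      w ᵥ* (Matrix.of fun i j => ∫ ω, Y ω i * Z ω j ∂P : Matrix (Fin m) (Fin p) ℝ) = 0 ∧
      IndepFun (fun ω => ∑ i, w i * Y ω i) Z P := by
  classical
  -- Step 1: find a nonzero `w` with `w ᵥ* A = 0`.
  have hker : (LinearMap.ker Aᵀ.mulVecLin) ≠ ⊥ := by
    intro hbot
    have hinj : Function.Injective Aᵀ.mulVecLin := LinearMap.ker_eq_bot.mp hbot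
    have hr : Aᵀ.rank = m := by
      rw [Matrix.rank, LinearMap.finrank_range_of_inj hinj]
      simp [Module.finrank_pi]
    rw [Matrix.rank_transpose, hArank] at hr
    omega
  obtain ⟨w, hwmem, hw0⟩ := Submodule.exists_mem_ne_zero_of_ne_bot hker
  have hwA : w ᵥ* A = 0 := by
    have : Aᵀ.mulVec w = 0 := hwmem
    rwa [Matrix.mulVec_transpose] at this
  -- Z coordinates are L².
  have hZcoord : ∀ j ω, Z ω j = (∑ k, B j k * L ω k) + EZ ω j := by
    intro j ω
    rw [hZ ω]
    simp [Matrix.mulVec, dotProduct]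
  have hZL2 : ∀ j, MemLp (fun ω => Z ω j) 2 P := by
    intro j
    have heq : (fun ω => Z ω j) = fun ω => (∑ k, B j k * L ω k) + EZ ω j :=
      funext (hZcoord j)
    rw [heq]
    refine MemLp.add ?_ (hEZL2 j)
    exact memLp_finset_sum _ (fun k _ => (hLL2 k).const_mul (B j k))
  -- Independence of coordinates of EY and Z.
  set ψ : (Fin l → ℝ) × (Fin p → ℝ) → Fin p → ℝ :=
    fun q => B.mulVec q.1 + q.2 with hψdef
  have hψmeas : Measurable ψ := by
    refine measurable_pi_lambda _ (fun j => ?_)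
    have : (fun q : (Fin l → ℝ) × (Fin p → ℝ) => ψ q j)
        = fun q => (∑ k, B j k * q.1 k) + q.2 j := by
      funext q; simp [hψdef, Matrix.mulVec, dotProduct]
    rw [this]
    refine Measurable.add ?_ ((measurable_pi_apply j).comp measurable_snd)
    exact Finset.measurable_sum _ fun k _ => by
      fun_prop
  have hZcomp : Z = ψ ∘ (fun ω => (L ω, EZ ω)) := by
    funext ω; simp [hψdef, hZ ω]
  have hindZ : IndepFun EY Z P := by
    rw [hZcomp]
    exact h2.comp measurable_id hψmeas
  have hEYZ : ∀ i j, (∫ ω, EY ω i * Z ω j ∂P) = 0 := by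
    intro i j
    have hind : IndepFun (fun ω => EY ω i) (fun ω => Z ω j) P :=
      hindZ.comp (measurable_pi_apply i) (measurable_pi_apply j)
    have := hind.integral_fun_mul_eq_mul_integral
      (hEYL2 i).aestronglyMeasurable (hZL2 j).aestronglyMeasurable
    beta_reduce at this
    rw [hEYmean i, zero_mul] at this
    exact this
  -- compute the cross moments of Y and Z
  have hkey : ∀ i j, (∫ ω, Y ω i * Z ω j ∂P) = ∑ k, A i k * ∫ ω, L ω k * Z ω j ∂P := by
    intro i j
    have heq : (fun ω => Y ω i * Z ω j)
        = fun ω => (∑ k, A i k * (L ω k * Z ω j)) + EY ω i * Z ω j := by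
      funext ω
      rw [hY ω]
      simp [Matrix.mulVec, dotProduct, add_mul, Finset.sum_mul, mul_assoc]
    rw [heq, integral_add, integral_finset_sum]
    · rw [hEYZ i j, add_zero]
      exact Finset.sum_congr rfl fun k _ => integral_const_mul _ _
    · exact fun k _ => (integrable_mul_of_memL2 (hLL2 k) (hZL2 j)).const_mul (A i k)
    · exact integrable_finset_sum _ fun k _ =>
        (integrable_mul_of_memL2 (hLL2 k) (hZL2 j)).const_mul (A i k)
    · exact integrable_mul_of_memL2 (hEYL2 i) (hZL2 j)
  refine ⟨w, hw0, ?_, ?_⟩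
  · -- w ᵥ* E[Y Zᵀ] = 0
    funext j
    have hwAk : ∀ k, (∑ i, w i * A i k) = 0 := by
      intro k
      have := congrFun hwA k
      simpa [Matrix.vecMul, dotProduct] using this
    simp only [Matrix.vecMul, dotProduct, Matrix.of_apply, Pi.zero_apply]
    calc (∑ i, w i * ∫ ω, Y ω i * Z ω j ∂P)
        = ∑ i, ∑ k, w i * A i k * ∫ ω, L ω k * Z ω j ∂P := by
          refine Finset.sum_congr rfl fun i _ => ?_
          rw [hkey i j, Finset.mul_sum]
          exact Finset.sum_congr rfl fun k _ => by ring
      _ = ∑ k, (∑ i, w i * A i k) * ∫ ω, L ω k * Z ω j ∂P := by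
          rw [Finset.sum_comm]
          exact Finset.sum_congr rfl fun k _ => by rw [Finset.sum_mul]
      _ = 0 := by simp [hwAk]
  · -- independence
    have heq : (fun ω => ∑ i, w i * Y ω i) = fun ω => ∑ i, w i * EY ω i := by
      funext ω
      rw [hY ω]
      have h0 : (∑ i, w i * (A.mulVec (L ω)) i) = 0 := by
        have : w ⬝ᵥ (A.mulVec (L ω)) = (w ᵥ* A) ⬝ᵥ L ω := dotProduct_mulVec w A (L ω)
        simpa [dotProduct, hwA] using this
      simp [mul_add, Finset.sum_add_distrib, h0]
    rw [heq, hZcomp]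
    have hφ : Measurable (fun v : Fin m → ℝ => ∑ i, w i * v i) :=
      Finset.measurable_sum _ fun i _ => by fun_prop
    exact IndepFun.comp (φ := fun v : Fin m → ℝ => ∑ i, w i * v i) h2 hφ hψmeas
end

section
/- Let d ≥ 1, let c ∈ ℝ^d, let σ > 0, and let L be a real number with L ≥ 2·φ(0)·‖c‖₁/σ, where φ(0) = (2π)^{-1/2} and ‖c‖₁ = Σ_{i=1}^{d} |c_i|. For a ∈ ℝ^d let f_a : ℝ → ℝ be the density of the Gaussian distribution N(⟨c,a⟩, σ²), i.e., f_a(x) = (σ√(2π))^{-1}·exp(−(x−⟨c,a⟩)²/(2σ²)), where ⟨c,a⟩ = Σ_i c_i a_i. Then for all a, a' ∈ ℝ^d, ∫_ℝ |f_a(x) − f_{a'}(x)| dx ≤ L · Σ_{i=1}^{d} |a_i − a'_i|. -/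
open MeasureTheory Set Real

/-- The density of the Gaussian distribution `N(μ, σ²)`. -/
noncomputable def gaussDensity (μ σ : ℝ) (x : ℝ) : ℝ :=
  (σ * Real.sqrt (2 * Real.pi))⁻¹ * Real.exp (-(x - μ) ^ 2 / (2 * σ ^ 2))

lemma gaussDensity_nonneg (μ σ : ℝ) (hσ : 0 < σ) (x : ℝ) : 0 ≤ gaussDensity μ σ x := by
  unfold gaussDensity
  positivity

lemma gaussDensity_le (μ σ : ℝ) (hσ : 0 < σ) (x : ℝ) :
    gaussDensity μ σ x ≤ (σ * Real.sqrt (2 * Real.pi))⁻¹ := by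
  unfold gaussDensity
  have h1 : Real.exp (-(x - μ) ^ 2 / (2 * σ ^ 2)) ≤ 1 := by
    rw [Real.exp_le_one_iff]
    have : (0:ℝ) < 2 * σ ^ 2 := by positivity
    apply div_nonpos_of_nonpos_of_nonneg <;> nlinarith [sq_nonneg (x - μ)]
  have h2 : (0:ℝ) ≤ (σ * Real.sqrt (2 * Real.pi))⁻¹ := by positivity
  calc (σ * Real.sqrt (2 * Real.pi))⁻¹ * Real.exp (-(x - μ) ^ 2 / (2 * σ ^ 2))
      ≤ (σ * Real.sqrt (2 * Real.pi))⁻¹ * 1 := by gcongr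
    _ = _ := mul_one _

lemma integrable_gaussDensity (μ σ : ℝ) (hσ : 0 < σ) : Integrable (gaussDensity μ σ) := by
  have hb : (0:ℝ) < (2 * σ ^ 2)⁻¹ := by positivity
  have h := (integrable_exp_neg_mul_sq hb).comp_sub_right μ
  have h2 := h.const_mul (σ * Real.sqrt (2 * Real.pi))⁻¹
  convert h2 using 2 with x
  unfold gaussDensity
  ring_nf

lemma gaussDensity_shift (μ σ Δ x : ℝ) :
    gaussDensity (μ + Δ) σ x = gaussDensity μ σ (x - Δ) := by
  unfold gaussDensity
  ring_nf

/-- Translation of set integrals for Iio sets. -/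
lemma setIntegral_Iio_shift (f : ℝ → ℝ) (m Δ : ℝ) :
    ∫ x in Iio m, f (x - Δ) = ∫ x in Iio (m - Δ), f x := by
  rw [← integral_indicator measurableSet_Iio, ← integral_indicator measurableSet_Iio]
  have : ∀ x, (Iio m).indicator (fun x => f (x - Δ)) x
      = (Iio (m - Δ)).indicator f (x - Δ) := by
    intro x
    by_cases h : x < m
    · have h' : x - Δ < m - Δ := by linarith
      simp [Set.indicator_apply, Set.mem_Iio, h, h']
    · have h' : ¬ (x - Δ < m - Δ) := by intro h'; exact h (by linarith)
      simp [Set.indicator_apply, Set.mem_Iio, h, h']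
  simp_rw [this]
  exact integral_sub_right_eq_self ((Iio (m - Δ)).indicator f) Δ

lemma setIntegral_Ici_shift (f : ℝ → ℝ) (m Δ : ℝ) :
    ∫ x in Ici m, f (x - Δ) = ∫ x in Ici (m - Δ), f x := by
  rw [← integral_indicator measurableSet_Ici, ← integral_indicator measurableSet_Ici]
  have : ∀ x, (Ici m).indicator (fun x => f (x - Δ)) x
      = (Ici (m - Δ)).indicator f (x - Δ) := by
    intro x
    by_cases h : m ≤ x
    · have h' : m - Δ ≤ x - Δ := by linarith
      simp [Set.indicator_apply, Set.mem_Ici, h, h']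
    · have h' : ¬ (m - Δ ≤ x - Δ) := by intro h'; exact h (by linarith)
      simp [Set.indicator_apply, Set.mem_Ici, h, h']
  simp_rw [this]
  exact integral_sub_right_eq_self ((Ici (m - Δ)).indicator f) Δ

lemma tv_le (σ : ℝ) (hσ : 0 < σ) (μ ν : ℝ) (hμν : μ ≤ ν) :
    (∫ x, |gaussDensity μ σ x - gaussDensity ν σ x|)
      ≤ 2 * (Real.sqrt (2 * Real.pi))⁻¹ / σ * (ν - μ) := by
  set m : ℝ := (μ + ν) / 2 with hm
  set Δ : ℝ := ν - μ with hΔ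
  have hΔ0 : 0 ≤ Δ := by simp [hΔ]; linarith
  have hintμ := integrable_gaussDensity μ σ hσ
  have hintν := integrable_gaussDensity ν σ hσ
  have hint : Integrable (fun x => |gaussDensity μ σ x - gaussDensity ν σ x|) :=
    (hintμ.sub hintν).abs
  -- sign facts
  have hsign1 : ∀ x ∈ Iio m, gaussDensity ν σ x ≤ gaussDensity μ σ x := by
    intro x hx
    unfold gaussDensity
    have hx' : x < m := hx
    have h2 : (0:ℝ) < 2 * σ ^ 2 := by positivity
    have hsq : (x - μ) ^ 2 ≤ (x - ν) ^ 2 := by nlinarith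
    gcongr
  have hsign2 : ∀ x ∈ Ici m, gaussDensity μ σ x ≤ gaussDensity ν σ x := by
    intro x hx
    unfold gaussDensity
    have hx' : m ≤ x := hx
    have h2 : (0:ℝ) < 2 * σ ^ 2 := by positivity
    have hsq : (x - ν) ^ 2 ≤ (x - μ) ^ 2 := by nlinarith
    gcongr
  -- split the integral at m
  set C : ℝ := (σ * Real.sqrt (2 * Real.pi))⁻¹ with hC
  have hsplit : (∫ x, |gaussDensity μ σ x - gaussDensity ν σ x|)
      = (∫ x in Iio m, |gaussDensity μ σ x - gaussDensity ν σ x|)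
      + ∫ x in Ici m, |gaussDensity μ σ x - gaussDensity ν σ x| :=
    (intervalIntegral.integral_Iio_add_Ici hint.integrableOn hint.integrableOn).symm
  have h1 : (∫ x in Iio m, |gaussDensity μ σ x - gaussDensity ν σ x|)
      = ∫ x in Iio m, (gaussDensity μ σ x - gaussDensity ν σ x) := by
    apply setIntegral_congr_fun measurableSet_Iio
    intro x hx
    dsimp only
    exact abs_of_nonneg (sub_nonneg.mpr (hsign1 x hx))
  have h2 : (∫ x in Ici m, |gaussDensity μ σ x - gaussDensity ν σ x|)
      = ∫ x in Ici m, (gaussDensity ν σ x - gaussDensity μ σ x) := by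
    apply setIntegral_congr_fun measurableSet_Ici
    intro x hx
    dsimp only
    rw [abs_sub_comm]
    exact abs_of_nonneg (sub_nonneg.mpr (hsign2 x hx))
  -- translate gaussDensity ν to gaussDensity μ
  have hshift : ∀ x, gaussDensity ν σ x = gaussDensity μ σ (x - Δ) := by
    intro x
    rw [← gaussDensity_shift]
    congr 1
    simp [hΔ]
  have hshiftIio : (∫ x in Iio m, gaussDensity ν σ x)
      = ∫ x in Iio (m - Δ), gaussDensity μ σ x := by
    simp_rw [hshift]
    exact setIntegral_Iio_shift _ m Δ
  have hshiftIci : (∫ x in Ici m, gaussDensity ν σ x)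
      = ∫ x in Ici (m - Δ), gaussDensity μ σ x := by
    simp_rw [hshift]
    exact setIntegral_Ici_shift _ m Δ
  -- differences over Ico
  have hIoo : Iio (m - Δ) ∪ Ico (m - Δ) m = Iio m := Set.Iio_union_Ico_eq_Iio (by linarith)
  have hdisj : Disjoint (Iio (m - Δ)) (Ico (m - Δ) m) := by
    rw [Set.disjoint_left]
    rintro x hx ⟨h1, _⟩
    exact absurd hx (not_lt.mpr h1)
  have hdiffIio : (∫ x in Iio m, gaussDensity μ σ x)
      - (∫ x in Iio (m - Δ), gaussDensity μ σ x)
      = ∫ x in Ico (m - Δ) m, gaussDensity μ σ x := by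
    rw [← hIoo, setIntegral_union hdisj measurableSet_Ico hintμ.integrableOn hintμ.integrableOn]
    ring
  have hIci : Ico (m - Δ) m ∪ Ici m = Ici (m - Δ) := Set.Ico_union_Ici_eq_Ici (by linarith)
  have hdisj2 : Disjoint (Ico (m - Δ) m) (Ici m) := by
    rw [Set.disjoint_left]
    rintro x ⟨_, h2⟩ hx
    exact absurd hx (not_le.mpr h2)
  have hdiffIci : (∫ x in Ici (m - Δ), gaussDensity μ σ x)
      - (∫ x in Ici m, gaussDensity μ σ x)
      = ∫ x in Ico (m - Δ) m, gaussDensity μ σ x := by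
    rw [← hIci, setIntegral_union hdisj2 measurableSet_Ici hintμ.integrableOn hintμ.integrableOn]
    ring
  -- bound the Ico integral
  have hbound : (∫ x in Ico (m - Δ) m, gaussDensity μ σ x) ≤ C * Δ := by
    have hvol : volume (Ico (m - Δ) m) < ⊤ := by
      rw [Real.volume_Ico]
      exact ENNReal.ofReal_lt_top
    have hnorm := norm_setIntegral_le_of_norm_le_const (C := C) (f := gaussDensity μ σ) hvol
      (fun x _ => by
        rw [Real.norm_eq_abs, abs_of_nonneg (gaussDensity_nonneg μ σ hσ x)]
        exact gaussDensity_le μ σ hσ x)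
    have hvol2 : (volume (Ico (m - Δ) m)).toReal = Δ := by
      rw [Real.volume_Ico, ENNReal.toReal_ofReal (by linarith)]
      ring
    calc (∫ x in Ico (m - Δ) m, gaussDensity μ σ x)
        ≤ ‖∫ x in Ico (m - Δ) m, gaussDensity μ σ x‖ := le_abs_self _
      _ ≤ C * (volume (Ico (m - Δ) m)).toReal := hnorm
      _ = C * Δ := by rw [hvol2]
  -- assemble
  have hfin : (∫ x, |gaussDensity μ σ x - gaussDensity ν σ x|) ≤ 2 * C * Δ := by
    calc (∫ x, |gaussDensity μ σ x - gaussDensity ν σ x|)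
        = (∫ x in Iio m, (gaussDensity μ σ x - gaussDensity ν σ x))
          + ∫ x in Ici m, (gaussDensity ν σ x - gaussDensity μ σ x) := by
          rw [hsplit, h1, h2]
      _ = ((∫ x in Iio m, gaussDensity μ σ x) - ∫ x in Iio m, gaussDensity ν σ x)
          + ((∫ x in Ici m, gaussDensity ν σ x) - ∫ x in Ici m, gaussDensity μ σ x) := by
          rw [integral_sub hintμ.integrableOn hintν.integrableOn,
            integral_sub hintν.integrableOn hintμ.integrableOn]
      _ = ((∫ x in Iio m, gaussDensity μ σ x) - ∫ x in Iio (m - Δ), gaussDensity μ σ x)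
          + ((∫ x in Ici (m - Δ), gaussDensity μ σ x) - ∫ x in Ici m, gaussDensity μ σ x) := by
          rw [hshiftIio, hshiftIci]
      _ = (∫ x in Ico (m - Δ) m, gaussDensity μ σ x)
          + ∫ x in Ico (m - Δ) m, gaussDensity μ σ x := by
          rw [hdiffIio, hdiffIci]
      _ ≤ C * Δ + C * Δ := add_le_add hbound hbound
      _ = 2 * C * Δ := by ring
  calc (∫ x, |gaussDensity μ σ x - gaussDensity ν σ x|) ≤ 2 * C * Δ := hfin
    _ = 2 * (Real.sqrt (2 * Real.pi))⁻¹ / σ * (ν - μ) := by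
        rw [hC, hΔ, mul_inv]
        ring

lemma tv_abs (σ : ℝ) (hσ : 0 < σ) (μ ν : ℝ) :
    (∫ x, |gaussDensity μ σ x - gaussDensity ν σ x|)
      ≤ 2 * (Real.sqrt (2 * Real.pi))⁻¹ / σ * |μ - ν| := by
  rcases le_total μ ν with h | h
  · rw [abs_of_nonpos (by linarith), neg_sub]
    exact tv_le σ hσ μ ν h
  · rw [abs_of_nonneg (by linarith)]
    have := tv_le σ hσ ν μ h
    simpa [abs_sub_comm] using this

/-- If `L ≥ 2 φ(0) ‖c‖₁ / σ` with `φ(0) = (2π)^{-1/2}`, then the family of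
Gaussian densities `N(⟨c,a⟩, σ²)`, indexed by `a ∈ ℝ^d`, satisfies TV(L) smoothness:
`‖f_a − f_{a'}‖₁ ≤ L ‖a − a'‖₁` for all `a, a'`. -/
theorem stmt13 (d : ℕ) (hd : 1 ≤ d) (c : Fin d → ℝ) (σ L : ℝ) (hσ : 0 < σ)
    (hL : 2 * (Real.sqrt (2 * Real.pi))⁻¹ * (∑ i, |c i|) / σ ≤ L) :
    ∀ a a' : Fin d → ℝ,
      (∫ x, |gaussDensity (∑ i, c i * a i) σ x - gaussDensity (∑ i, c i * a' i) σ x|) ≤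
        L * ∑ i, |a i - a' i| := by
  intro a a'
  have hs : (0:ℝ) < Real.sqrt (2 * Real.pi) := Real.sqrt_pos.mpr (by positivity)
  have key := tv_abs σ hσ (∑ i, c i * a i) (∑ i, c i * a' i)
  have habs : |(∑ i, c i * a i) - ∑ i, c i * a' i|
      ≤ (∑ i, |c i|) * ∑ i, |a i - a' i| := by
    rw [← Finset.sum_sub_distrib]
    calc |∑ i, (c i * a i - c i * a' i)| ≤ ∑ i, |c i * a i - c i * a' i| :=
          Finset.abs_sum_le_sum_abs _ _
      _ = ∑ i, |c i| * |a i - a' i| := by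
          apply Finset.sum_congr rfl
          intro i _
          rw [← abs_mul, mul_sub]
      _ ≤ ∑ i, (∑ j, |c j|) * |a i - a' i| := by
          apply Finset.sum_le_sum
          intro i _
          apply mul_le_mul_of_nonneg_right _ (abs_nonneg _)
          exact Finset.single_le_sum (fun j _ => abs_nonneg (c j)) (Finset.mem_univ i)
      _ = (∑ i, |c i|) * ∑ i, |a i - a' i| := by rw [← Finset.mul_sum]
  calc (∫ x, |gaussDensity (∑ i, c i * a i) σ x - gaussDensity (∑ i, c i * a' i) σ x|)
      ≤ 2 * (Real.sqrt (2 * Real.pi))⁻¹ / σ * |(∑ i, c i * a i) - ∑ i, c i * a' i| := key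
    _ ≤ 2 * (Real.sqrt (2 * Real.pi))⁻¹ / σ * ((∑ i, |c i|) * ∑ i, |a i - a' i|) := by
        apply mul_le_mul_of_nonneg_left habs
        positivity
    _ = (2 * (Real.sqrt (2 * Real.pi))⁻¹ * (∑ i, |c i|) / σ) * ∑ i, |a i - a' i| := by
        ring
    _ ≤ L * ∑ i, |a i - a' i| := by
        apply mul_le_mul_of_nonneg_right hL
        exact Finset.sum_nonneg fun i _ => abs_nonneg _
end
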